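/- Uniqueness of the Gandy–Hyland functional on continuous arguments: let Y : (ℕ → ℕ) → ℕ be pointwise continuous, and suppose Γ₁, Γ₂ : List ℕ → ℕ both satisfy the Gandy–Hyland equation Γ(s) = Y(β_Γ,s) for all s, where β_Γ,s i = s i for i < |s|, β_Γ,s(|s|) = 0, and β_Γ,s(|s| + 1 + n) = Γ(s ++ [n+1]). Then Γ₁ = Γ₂. -/

import Mathlib

/-!
If `Γ₁ s ≠ Γ₂ s`, then `ghSeq Γ₁ s ≠ ghSeq Γ₂ s`, and these sequences differ only at places of
the form `Γ (s ++ [n])`; so the disagreement propagates to a child of `s`, and by dependent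
choice along an infinite path `f` through `s`. Continuity of `Y` at `f` gives a modulus `N`;
at a node `t` of the path of length at least `N`, both `ghSeq Γᵢ t` agree with `f` below `N`,
so `Γ₁ t = Y f = Γ₂ t`, a contradiction. This is classical bar induction.
-/

/-- The infinite sequence `β` associated to `Γ` and `s` in the Gandy–Hyland equation. -/
def ghSeq (Γ : List ℕ → ℕ) (s : List ℕ) : ℕ → ℕ := fun i =>
  if i < s.length then s.getD i 0
  else if i = s.length then 0
  else Γ (s ++ [i - s.length])

open List in
theorem exists_append_seq_of_extendable {α : Type*} {P : List α → Prop}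
    (h : ∀ t, P t → ∃ a, P (t ++ [a])) {s : List α} (hs : P s) :
    ∃ e : ℕ → α, ∀ k, P (s ++ (range k).map e) := by
  choose next hnext using h
  let path : ℕ → {t // P t} := fun k =>
    Nat.rec ⟨s, hs⟩ (fun _ t => ⟨t.1 ++ [next t.1 t.2], hnext _ t.2⟩) k
  refine ⟨fun k => next (path k).1 (path k).2, fun k => ?_⟩
  suffices (path k).1 = s ++ (range k).map fun j => next (path j).1 (path j).2 from
    this ▸ (path k).2
  induction k with
  | zero => simp [path]
  | succ k ih => rw [range_succ, map_append, ← append_assoc, ← ih]; rfl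

open List in
theorem exists_seq_of_extendable {α : Type*} {P : List α → Prop}
    (h : ∀ t, P t → ∃ a, P (t ++ [a])) {s : List α} (hs : P s) :
    ∃ f : ℕ → α, ∀ k, s.length ≤ k → P ((range k).map f) := by
  obtain ⟨e, he⟩ := exists_append_seq_of_extendable h hs
  refine ⟨fun i => if hi : i < s.length then s[i] else e (i - s.length), fun k hk => ?_⟩
  obtain ⟨m, rfl⟩ := Nat.exists_eq_add_of_le hk
  convert he m using 1
  rw [range_add, map_append, map_map]
  congr 1
  · apply ext_getElem <;> simp +contextual
  · exact map_congr_left fun j _ => by simp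

/- The bar is required of all long enough initial segments, not just one: the branch through `s`
is only known to avoid `Q` from length `s.length` on. -/
open List in
theorem bar_induction {α : Type*} {Q : List α → Prop}
    (bar : ∀ f : ℕ → α, ∃ N, ∀ k, N ≤ k → Q ((range k).map f))
    (hered : ∀ t, (∀ a, Q (t ++ [a])) → Q t) (s : List α) : Q s := by
  by_contra hs
  obtain ⟨f, hf⟩ := exists_seq_of_extendable (P := fun t => ¬Q t)
    (fun t ht => by simpa using mt (hered t) ht) hs
  obtain ⟨N, hN⟩ := bar f
  exact hf (max N s.length) (le_max_right _ _) (hN _ (le_max_left _ _))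

theorem ghSeq_map_range_of_lt (Γ : List ℕ → ℕ) (f : ℕ → ℕ) {k i : ℕ} (hi : i < k) :
    ghSeq Γ ((List.range k).map f) i = f i := by
  simp [ghSeq, hi]

theorem ghSeq_congr {Γ₁ Γ₂ : List ℕ → ℕ} {s : List ℕ}
    (h : ∀ n, Γ₁ (s ++ [n]) = Γ₂ (s ++ [n])) : ghSeq Γ₁ s = ghSeq Γ₂ s := by
  funext i
  simp only [ghSeq, h]

/-- Uniqueness of the Gandy–Hyland functional on pointwise continuous arguments. -/
theorem gandy_hyland_unique (Y : (ℕ → ℕ) → ℕ)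
    (hY : ∀ f : ℕ → ℕ, ∃ N, ∀ g : ℕ → ℕ, (∀ i < N, f i = g i) → Y f = Y g)
    (Γ₁ Γ₂ : List ℕ → ℕ)
    (h₁ : ∀ s : List ℕ, Γ₁ s = Y (ghSeq Γ₁ s))
    (h₂ : ∀ s : List ℕ, Γ₂ s = Y (ghSeq Γ₂ s)) :
    Γ₁ = Γ₂ := by
  funext s
  refine bar_induction (Q := fun t => Γ₁ t = Γ₂ t) (fun f => ?_) (fun t ht => ?_) s
  · obtain ⟨N, hN⟩ := hY f
    refine ⟨N, fun k hk => ?_⟩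
    have hYf (Γ : List ℕ → ℕ) : Y f = Y (ghSeq Γ ((List.range k).map f)) :=
      hN _ fun i hi => (ghSeq_map_range_of_lt Γ f (by omega)).symm
    rw [h₁, h₂, ← hYf, ← hYf]
  · rw [h₁, h₂, ghSeq_congr ht]
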